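/- arXiv:1208.1337 — 5 statements merged into one kernel-verified Lean document; each statement's English description precedes it below -/
import Mathlib

section
/- Let K be a number field of degree d, let S = {v₀, v₁, …, v_r} (with r ≥ 1) be a finite set of places of K containing all archimedean places, and set S′ = S ∖ {v₀}. Let η₁, …, η_r be S-units of K (i.e. |η_k|_v = 1 for all places v ∉ S) such that the r×r real matrix A = (d_v log|η_k|_v)_{v∈S′, 1≤k≤r} is invertible and every entry of A^{−1} has absolute value at most M. Then for any rational integers b₁, …, b_r, the element η = η₁^{b₁} ⋯ η_r^{b_r} satisfies max{|b₁|, …, |b_r|} ≤ 2dM·h(η). -/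
open NumberField IsDedekindDomain

/-- The additive `v`-adic order of an element `x` of a number field `K`
(`0` by convention if `x = 0`). -/
noncomputable def vOrd (K : Type*) [Field K] [NumberField K]
    (v : HeightOneSpectrum (𝓞 K)) (x : K) : ℤ :=
  if h : v.valuation K x = 0 then 0 else - Multiplicative.toAdd (WithZero.unzero h)

/-- `d_v * log |x|_v`, where `v` is a place of the number field `K` (an infinite place
or a finite place, i.e. a nonzero prime of `𝓞 K`), `d_v = [K_v : ℚ_v]` is the local
degree, and `|·|_v` is normalized with respect to `ℚ` (`|2|_v = 2` for archimedean `v`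
and `|p|_v = p⁻¹` for `v` above the rational prime `p`).  For a finite place `v` above
`p` one has `d_v * log |x|_v = -ord_v(x) * log N(v)`. -/
noncomputable def dvLog (K : Type*) [Field K] [NumberField K] :
    (InfinitePlace K ⊕ HeightOneSpectrum (𝓞 K)) → K → ℝ
  | .inl w, x => (w.mult : ℝ) * Real.log (w x)
  | .inr v, x => -(vOrd K v x : ℝ) * Real.log (Ideal.absNorm v.asIdeal)

/-- The absolute logarithmic height of an element of a number field `K`:
`h(α) = d⁻¹ * ∑_v d_v * log⁺ |α|_v`, the sum being over all places of `K`. -/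
noncomputable def logHeight (K : Type*) [Field K] [NumberField K] (x : K) : ℝ :=
  (Module.finrank ℚ K : ℝ)⁻¹ *
    ((∑ w : InfinitePlace K, max (dvLog K (.inl w) x) 0) +
      ∑ᶠ v : HeightOneSpectrum (𝓞 K), max (dvLog K (.inr v) x) 0)

/-!
Write `x = ∏ ηᵢ ^ bᵢ` and `y_v = d_v log |x|_v`. Since `x` is an `S`-unit, the product formula
says `∑_{v ∈ S} y_v = 0`, so `∑_{v ∈ S} |y_v| = 2 ∑_{v ∈ S} max(y_v, 0) = 2 d h(x)`. On the other
hand `(y_v)_{v ∈ S'} = A b`, hence `b = A⁻¹ (y_v)_{v ∈ S'}` and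
`|b_k| ≤ M ∑_{v ∈ S'} |y_v| ≤ 2 d M h(x)`.
-/

open Finset Matrix

theorem Matrix.abs_mulVec_apply_le {m n : Type*} [Fintype n] (B : Matrix m n ℝ) {M : ℝ}
    (hB : ∀ i j, |B i j| ≤ M) (y : n → ℝ) (i : m) :
    |(B *ᵥ y) i| ≤ M * ∑ j, |y j| :=
  calc |(B *ᵥ y) i| = |∑ j, B i j * y j| := rfl
    _ ≤ ∑ j, |B i j * y j| := abs_sum_le_sum_abs _ _
    _ ≤ ∑ j, M * |y j| := sum_le_sum fun j _ => by
          rw [abs_mul]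
          exact mul_le_mul_of_nonneg_right (hB i j) (abs_nonneg _)
    _ = M * ∑ j, |y j| := (mul_sum _ _ _).symm

theorem Finset.sum_inl_add_finsum_inr_eq_sum {α β M : Type*} [Fintype α] [AddCommMonoid M]
    (S : Finset (α ⊕ β)) (hS : ∀ a, .inl a ∈ S) (g : α ⊕ β → M) (hg : ∀ u ∉ S, g u = 0) :
    ∑ a, g (.inl a) + ∑ᶠ b, g (.inr b) = ∑ u ∈ S, g u := by
  have hleft : S.toLeft = univ := eq_univ_of_forall fun a => mem_toLeft.mpr (hS a)
  have hright : ∑ᶠ b, g (.inr b) = ∑ b ∈ S.toRight, g (.inr b) :=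
    finsum_eq_sum_of_support_subset _ fun b hb =>
      mem_toRight.mpr (not_not.mp fun hbS => hb (hg _ hbS))
  rw [hright, ← hleft, ← sum_disjSum, toLeft_disjSum_toRight]

section Places

variable {K : Type*} [Field K] [NumberField K]

/-- `x ↦ |x|_u ^ d_u`; Mathlib's `FinitePlace.mk v` is already normalized this way. -/
noncomputable def normalizedAbv : InfinitePlace K ⊕ HeightOneSpectrum (𝓞 K) → K →*₀ ℝ
  | .inl w => (powMonoidWithZeroHom (InfinitePlace.mult_ne_zero (w := w))).comp
      (AbsoluteValue.toMonoidWithZeroHom w.val)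
  | .inr v => AbsoluteValue.toMonoidWithZeroHom (FinitePlace.mk v).val

theorem normalizedAbv_inl (w : InfinitePlace K) (x : K) :
    normalizedAbv (.inl w) x = w x ^ w.mult :=
  rfl

theorem normalizedAbv_inr (v : HeightOneSpectrum (𝓞 K)) (x : K) :
    normalizedAbv (.inr v) x = FinitePlace.mk v x :=
  rfl

theorem dvLog_eq_log_normalizedAbv (u : InfinitePlace K ⊕ HeightOneSpectrum (𝓞 K)) (x : K) :
    dvLog K u x = Real.log (normalizedAbv u x) := by
  rcases u with w | v
  · rw [normalizedAbv_inl, Real.log_pow, dvLog]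
  · rw [normalizedAbv_inr, FinitePlace.mk_apply, FinitePlace.norm_embedding', dvLog, vOrd]
    by_cases hx : v.valuation K x = 0
    · simp [hx]
    · rw [dif_neg hx, WithZeroMulInt.toNNReal_neg_apply _ hx, NNReal.coe_zpow, Real.log_zpow]
      push_cast
      ring

theorem dvLog_prod_zpow {ι : Type*} (s : Finset ι) (u : InfinitePlace K ⊕ HeightOneSpectrum (𝓞 K))
    {η : ι → K} (hη : ∀ i ∈ s, η i ≠ 0) (b : ι → ℤ) :
    dvLog K u (∏ i ∈ s, η i ^ b i) = ∑ i ∈ s, b i * dvLog K u (η i) := by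
  simp only [dvLog_eq_log_normalizedAbv, map_prod, map_zpow₀]
  rw [Real.log_prod fun i hi => zpow_ne_zero _ ((map_ne_zero _).mpr (hη i hi))]
  exact sum_congr rfl fun i _ => Real.log_zpow _ _

theorem sum_dvLog_eq_zero {x : K} (hx : x ≠ 0) :
    ∑ w : InfinitePlace K, dvLog K (.inl w) x + ∑ᶠ v : HeightOneSpectrum (𝓞 K), dvLog K (.inr v) x
      = 0 := by
  have hprod := prod_abs_eq_one hx
  have h := congrArg Real.log hprod
  rw [Real.log_mul (left_ne_zero_of_mul_eq_one hprod) (right_ne_zero_of_mul_eq_one hprod),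
    Real.log_prod fun w _ => pow_ne_zero _ (w.pos_iff.mpr hx).ne',
    Real.log_finprod fun w => w.pos_iff.mpr hx, Real.log_one,
    ← finsum_comp_equiv FinitePlace.equivHeightOneSpectrum.symm] at h
  simpa only [dvLog_eq_log_normalizedAbv, normalizedAbv_inl, normalizedAbv_inr,
    FinitePlace.equivHeightOneSpectrum_symm_apply, FinitePlace.mk_apply] using h

theorem sum_abs_dvLog_eq_two_mul_logHeight (S : Finset (InfinitePlace K ⊕ HeightOneSpectrum (𝓞 K)))
    (hS : ∀ w, .inl w ∈ S) {x : K} (hx : x ≠ 0) (hxS : ∀ u ∉ S, dvLog K u x = 0) :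
    ∑ u ∈ S, |dvLog K u x| = 2 * Module.finrank ℚ K * logHeight K x := by
  have hsum : ∑ u ∈ S, dvLog K u x = 0 := by
    rw [← sum_inl_add_finsum_inr_eq_sum S hS _ hxS]
    exact sum_dvLog_eq_zero hx
  have hpos : ∑ u ∈ S, max (dvLog K u x) 0 = Module.finrank ℚ K * logHeight K x := by
    rw [← sum_inl_add_finsum_inr_eq_sum S hS _ fun u hu => by simp [hxS u hu], logHeight,
      ← mul_assoc, mul_inv_cancel₀ (Nat.cast_ne_zero.mpr Module.finrank_pos.ne'), one_mul]
  have habs : ∀ t : ℝ, |t| = 2 * max t 0 - t := fun t => by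
    linarith [max_zero_add_max_neg_zero_eq_abs_self t, max_zero_sub_eq_self t]
  rw [sum_congr rfl fun u _ => habs _, sum_sub_distrib, ← mul_sum, hsum, hpos]
  ring

end Places

theorem abs_exponent_le_of_fundamental_system_general (K : Type*) [Field K] [NumberField K]
    (r : ℕ)
    (v : Fin (r + 1) → (InfinitePlace K ⊕ HeightOneSpectrum (𝓞 K)))
    (hv : Function.Injective v)
    (harch : ∀ w : InfinitePlace K, ∃ i, v i = Sum.inl w)
    (η : Fin r → K) (hη : ∀ k, η k ≠ 0)
    (hunit : ∀ k, ∀ u, u ∉ Set.range v → dvLog K u (η k) = 0)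
    (A Ainv : Matrix (Fin r) (Fin r) ℝ)
    (hA : ∀ i k, A i k = dvLog K (v i.succ) (η k))
    (hinv₂ : Ainv * A = 1)
    (M : ℝ) (hM : ∀ i j, |Ainv i j| ≤ M)
    (b : Fin r → ℤ) :
    ∀ k, (|b k| : ℝ) ≤
      2 * (Module.finrank ℚ K : ℝ) * M * logHeight K (∏ i, η i ^ b i) := by
  intro k
  classical
  set x := ∏ i, η i ^ b i
  have hx : x ≠ 0 := prod_ne_zero_iff.mpr fun i _ => zpow_ne_zero _ (hη i)
  have hdvLog : ∀ u, dvLog K u x = ∑ i, b i * dvLog K u (η i) := fun u =>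
    dvLog_prod_zpow _ u (fun i _ => hη i) b
  set S := univ.image v
  have hS : ∀ w, Sum.inl w ∈ S := fun w => by
    obtain ⟨i, hi⟩ := harch w
    exact mem_image.mpr ⟨i, mem_univ _, hi⟩
  have hxS : ∀ u ∉ S, dvLog K u x = 0 := fun u hu => by
    rw [hdvLog]
    refine sum_eq_zero fun i _ => ?_
    rw [hunit i u (by simpa [S] using hu), mul_zero]
  set y : Fin r → ℝ := fun i => dvLog K (v i.succ) x
  have hb : (fun j => (b j : ℝ)) = Ainv *ᵥ y := by
    have hAb : A *ᵥ (fun j => (b j : ℝ)) = y := by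
      ext i
      simp only [y, hdvLog, mulVec, dotProduct, hA, mul_comm]
    rw [← hAb, mulVec_mulVec, hinv₂, one_mulVec]
  have hy : ∑ i, |y i| ≤ 2 * Module.finrank ℚ K * logHeight K x := by
    rw [← sum_abs_dvLog_eq_two_mul_logHeight S hS hx hxS, sum_image hv.injOn, Fin.sum_univ_succ]
    exact le_add_of_nonneg_left (abs_nonneg _)
  have hM₀ : 0 ≤ M := (abs_nonneg _).trans (hM k k)
  calc (|b k| : ℝ) = |(Ainv *ᵥ y) k| := by rw [← hb]
    _ ≤ M * ∑ i, |y i| := Ainv.abs_mulVec_apply_le hM y k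
    _ ≤ M * (2 * Module.finrank ℚ K * logHeight K x) := mul_le_mul_of_nonneg_left hy hM₀
    _ = 2 * Module.finrank ℚ K * M * logHeight K x := by ring

/-- Let `K` be a number field of degree `d` and `S = {v₀, v₁, …, v_r}` (`r ≥ 1`) a set
of places of `K` containing all the archimedean places; set `S' = S \ {v₀}`.  Let
`η₁, …, η_r` be `S`-units (i.e. `|η_k|_v = 1`, equivalently `d_v * log |η_k|_v = 0`,
for every place `v ∉ S`) such that the `r × r` matrix
`A = (d_v log |η_k|_v)_{v ∈ S', 1 ≤ k ≤ r}` is invertible with all entries of `A⁻¹`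
bounded in absolute value by `M`.  Then for any integers `b₁, …, b_r` and
`η = η₁^{b₁} ⋯ η_r^{b_r}` one has `max |b_k| ≤ 2 d M h(η)`. -/
theorem abs_exponent_le_of_fundamental_system (K : Type*) [Field K] [NumberField K]
    (r : ℕ) (hr : 1 ≤ r)
    (v : Fin (r + 1) → (InfinitePlace K ⊕ HeightOneSpectrum (𝓞 K)))
    (hv : Function.Injective v)
    (harch : ∀ w : InfinitePlace K, ∃ i, v i = Sum.inl w)
    (η : Fin r → K) (hη : ∀ k, η k ≠ 0)
    (hunit : ∀ k, ∀ u, u ∉ Set.range v → dvLog K u (η k) = 0)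
    (A Ainv : Matrix (Fin r) (Fin r) ℝ)
    (hA : ∀ i k, A i k = dvLog K (v i.succ) (η k))
    (hinv₁ : A * Ainv = 1) (hinv₂ : Ainv * A = 1)
    (M : ℝ) (hM : ∀ i j, |Ainv i j| ≤ M)
    (b : Fin r → ℤ) :
    ∀ k, (|b k| : ℝ) ≤
      2 * (Module.finrank ℚ K : ℝ) * M * logHeight K (∏ i, η i ^ b i) :=
  abs_exponent_le_of_fundamental_system_general K r v hv harch η hη hunit A Ainv hA hinv₂ M hM b
end

section
/- Let K₀ ⊆ K be number fields with n = [K : K₀], let 𝔭₀ be a nonzero prime ideal of the ring of integers of K₀, and let 𝔭₁, …, 𝔭_m be the prime ideals of the ring of integers of K lying above 𝔭₀. Then ∏_{i=1}^m log N(𝔭_i) ≤ 4^n (log N(𝔭₀))^n, where N(·) denotes the absolute norm of a prime ideal. -/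
/-!
Put `L = log N(𝔭₀) ≥ log 2`. A prime `𝔭` over `𝔭₀` of inertia degree `f` has
`log N(𝔭) = f L ≤ (4L)^f` by Bernoulli's inequality, and the inertia degrees add up to at most
`n` since `∑ e_𝔭 f_𝔭 = n` with every `e_𝔭 ≥ 1`. As `4L ≥ 1`, the product is at most `(4L)^n`.
-/

open NumberField

theorem natCast_mul_le_four_mul_pow {L : ℝ} (hL : 1 / 3 ≤ L) (f : ℕ) :
    f * L ≤ (4 * L) ^ f :=
  calc (f : ℝ) * L ≤ 1 + f * (4 * L - 1) := by nlinarith [f.cast_nonneg (α := ℝ)]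
    _ ≤ (1 + (4 * L - 1)) ^ f := one_add_mul_le_pow (by linarith) f
    _ = (4 * L) ^ f := by ring_nf

namespace Ideal

theorem one_lt_absNorm_of_ne_bot {S : Type*} [CommRing S] [IsDedekindDomain S]
    [Module.Free ℤ S] [Module.Finite ℤ S] {P : Ideal S} [P.IsPrime] (hP : P ≠ ⊥) :
    1 < absNorm P := by
  have h0 : absNorm P ≠ 0 := absNorm_eq_zero_iff.not.mpr hP
  have h1 : absNorm P ≠ 1 := absNorm_eq_one_iff.not.mpr IsPrime.ne_top'
  omega

theorem sum_inertiaDeg_le_finrank {R S : Type*} [CommRing R] [IsDomain R] [CommRing S]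
    [Algebra R S] [Module.Finite R S] [Module.Flat R S] (p : Ideal R) [p.IsPrime]
    (s : Finset (Ideal S)) (hs : ∀ q, q ∈ s ↔ q ∈ p.primesOver S) :
    ∑ q ∈ s, q.inertiaDeg R ≤ Module.finrank R S := by
  let : Fintype (p.primesOver S) := Fintype.ofFinset s hs
  rw [Finset.sum_subtype s hs, ← sum_ramification_inertia_eq_finrank p S]
  gcongr with q
  have : q.1.IsPrime := q.2.1
  exact Nat.le_mul_of_pos_left _ (ramificationIdx_pos q.1 R)

end Ideal

/-- Let `K₀ ⊆ K` be number fields with `n = [K : K₀]`, let `𝔭₀` be a nonzero prime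
ideal of `𝓞 K₀`, and let `s` be the set of prime ideals of `𝓞 K` lying above `𝔭₀`.
Then `∏_{𝔭 ∈ s} log N(𝔭) ≤ 4 ^ n * (log N(𝔭₀)) ^ n`, where `N(·)` is the absolute
norm. -/
theorem prod_log_absNorm_primes_over_le (K₀ K : Type*) [Field K₀] [Field K]
    [NumberField K₀] [NumberField K] [Algebra K₀ K]
    (n : ℕ) (hn : n = Module.finrank K₀ K)
    (p₀ : Ideal (𝓞 K₀)) (hp₀ : p₀.IsPrime) (hp₀0 : p₀ ≠ ⊥)
    (s : Finset (Ideal (𝓞 K)))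
    (hs : ∀ Q : Ideal (𝓞 K),
      Q ∈ s ↔ Q.IsPrime ∧ Ideal.comap (algebraMap (𝓞 K₀) (𝓞 K)) Q = p₀) :
    ∏ Q ∈ s, Real.log (Ideal.absNorm Q) ≤
      4 ^ n * Real.log (Ideal.absNorm p₀) ^ n := by
  set L := Real.log (Ideal.absNorm p₀)
  have hs_primesOver (Q : Ideal (𝓞 K)) : Q ∈ s ↔ Q ∈ p₀.primesOver (𝓞 K) :=
    (hs Q).trans <| and_congr_right fun _ => by
      rw [Ideal.liesOver_iff, Ideal.under_def, eq_comm]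
  have hL : 1 / 3 ≤ L := by
    have h2 : (2 : ℝ) ≤ Ideal.absNorm p₀ := mod_cast Ideal.one_lt_absNorm_of_ne_bot hp₀0
    have := Real.log_le_log two_pos h2
    linarith [Real.log_two_gt_d9]
  have hlog (Q : Ideal (𝓞 K)) (hQ : Q ∈ s) :
      Real.log (Ideal.absNorm Q) = Q.inertiaDeg (𝓞 K₀) * L := by
    obtain ⟨_, _⟩ := (hs_primesOver Q).mp hQ
    rw [← Ideal.absNorm_pow_inertiaDeg p₀ Q, Nat.cast_pow, Real.log_pow]
  have hsum : ∑ Q ∈ s, Q.inertiaDeg (𝓞 K₀) ≤ n := by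
    rw [hn, IsFractionRing.finrank_eq (𝓞 K₀) K₀ (𝓞 K) K]
    exact Ideal.sum_inertiaDeg_le_finrank p₀ s hs_primesOver
  calc ∏ Q ∈ s, Real.log (Ideal.absNorm Q)
      = ∏ Q ∈ s, Q.inertiaDeg (𝓞 K₀) * L := Finset.prod_congr rfl hlog
    _ ≤ ∏ Q ∈ s, (4 * L) ^ Q.inertiaDeg (𝓞 K₀) :=
        Finset.prod_le_prod (fun _ _ => by positivity) fun _ _ => natCast_mul_le_four_mul_pow hL _
    _ = (4 * L) ^ ∑ Q ∈ s, Q.inertiaDeg (𝓞 K₀) := Finset.prod_pow_eq_pow_sum _ _ _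
    _ ≤ (4 * L) ^ n := pow_le_pow_right₀ (by linarith) hsum
    _ = 4 ^ n * L ^ n := mul_pow _ _ _
end

section
/- Let K₀ be a number field of degree d₀ with absolute discriminant D₀, let N ≥ 2 be an integer, let ζ_N be a primitive N-th root of unity, and let K = K₀(ζ_N) with absolute discriminant D. Then |D| ≤ N^{d₀N} |D₀|^{φ(N)}, where φ is Euler's totient function. -/
/-!
If `f` is the minimal polynomial of `ζ` over `𝓞 K₀`, then `f'(ζ)` lies in the relative different
`𝔇` of `𝓞 K / 𝓞 K₀`, and differentiating `X ^ N - 1 = f * g` at the unit `ζ` shows that `f'(ζ)`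
divides `N`. Hence `𝔇` divides `(N)`, whose absolute norm is `N ^ [K : ℚ]`, and the tower formula
`|D| = 𝔑(𝔇) * |D₀| ^ [K : K₀]` together with `[K : K₀] ≤ φ(N)` gives the bound.
-/

open NumberField Module Polynomial

theorem natCast_mem_differentIdeal_of_pow_eq_one
    (A K : Type*) {L B : Type*} [CommRing A] [Field K] [CommRing B] [Field L]
    [Algebra A K] [Algebra B L] [Algebra A B] [Algebra K L] [Algebra A L]
    [IsScalarTower A K L] [IsScalarTower A B L] [IsDomain A] [IsFractionRing A K]
    [FiniteDimensional K L] [Algebra.IsSeparable K L] [IsIntegralClosure B A L]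
    [IsIntegrallyClosed A] [IsDedekindDomain B] [IsTorsionFree A B]
    {n : ℕ} {x : B} (hxn : x ^ n = 1) (hx : Algebra.adjoin K {algebraMap B L x} = ⊤) :
    (n : B) ∈ differentIdeal A B := by
  obtain _ | n := n
  · simp
  have hAx : IsIntegral A x := IsIntegralClosure.isIntegral A L x
  obtain ⟨g, hg⟩ := minpoly.isIntegrallyClosed_dvd hAx (p := X ^ (n + 1) - 1) (by simp [hxn])
  have hderiv : ((n + 1 : ℕ) : B) * x ^ n =
      aeval x (derivative (minpoly A x)) * aeval x g := by
    simpa using congr_arg (fun p ↦ aeval x (derivative p)) hg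
  have hfactor :
      ((n + 1 : ℕ) : B) = aeval x (derivative (minpoly A x)) * (aeval x g * x) := by
    rw [← mul_assoc, ← hderiv, mul_assoc, ← pow_succ, hxn, mul_one]
  rw [hfactor]
  exact Ideal.mul_mem_right _ _ (aeval_derivative_mem_differentIdeal A K L x hx)

theorem natAbs_discr_dvd_of_natCast_mem_differentIdeal (K L : Type*) [Field K] [Field L]
    [NumberField K] [NumberField L] [Algebra K L] {n : ℕ}
    (hn : (n : 𝓞 L) ∈ differentIdeal (𝓞 K) (𝓞 L)) :
    (discr L).natAbs ∣ n ^ finrank ℚ L * (discr K).natAbs ^ finrank K L := by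
  rw [natAbs_discr_eq_absNorm_differentIdeal_mul_natAbs_discr_pow K (𝓞 K) L (𝓞 L),
    ← RingOfIntegers.rank, ← Ideal.absNorm_span_natCast]
  exact mul_dvd_mul_right
    (Ideal.absNorm_dvd_absNorm_of_le ((Ideal.span_singleton_le_iff_mem _).mpr hn)) _

theorem IsPrimitiveRoot.finrank_le_totient {F L : Type*} [Field F] [Field L] [Algebra F L]
    {N : ℕ} (hN : N ≠ 0) {ζ : L} (hζ : IsPrimitiveRoot ζ N)
    (hgen : IntermediateField.adjoin F {ζ} = ⊤) : finrank F L ≤ N.totient := by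
  have hint : IsIntegral F ζ := (hζ.isIntegral (Nat.pos_of_ne_zero hN)).tower_top
  have hroot : aeval ζ (cyclotomic N F) = 0 := by
    rw [aeval_def, eval₂_eq_eval_map, map_cyclotomic]
    exact hζ.isRoot_cyclotomic (Nat.pos_of_ne_zero hN)
  rw [← IntermediateField.finrank_top', ← hgen, IntermediateField.adjoin.finrank hint,
    ← natDegree_cyclotomic N F]
  exact natDegree_le_of_dvd (minpoly.dvd F ζ hroot) (cyclotomic_ne_zero N F)

/-- Let `K₀` be a number field of degree `d₀` and absolute discriminant `D₀`, let
`N ≥ 2`, let `ζ` be a primitive `N`-th root of unity, and let `K = K₀(ζ)` with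
absolute discriminant `D`.  Then `|D| ≤ N ^ (d₀ N) * |D₀| ^ φ(N)`. -/
theorem abs_discr_adjoin_rootOfUnity_le (K₀ K : Type*) [Field K₀] [Field K]
    [NumberField K₀] [NumberField K] [Algebra K₀ K]
    (N : ℕ) (hN : 2 ≤ N) (ζ : K) (hζ : IsPrimitiveRoot ζ N)
    (hgen : IntermediateField.adjoin K₀ {ζ} = ⊤) :
    |NumberField.discr K| ≤
      (N : ℤ) ^ (Module.finrank ℚ K₀ * N) * |NumberField.discr K₀| ^ Nat.totient N := by
  have hN₀ : N ≠ 0 := by omega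
  let z : 𝓞 K := ⟨ζ, hζ.isIntegral (Nat.pos_of_ne_zero hN₀)⟩
  have hzN : z ^ N = 1 := Subtype.ext hζ.pow_eq_one
  have hz : Algebra.adjoin K₀ {algebraMap (𝓞 K) K z} = ⊤ :=
    IntermediateField.adjoin_eq_top_iff.mp hgen
  have hdvd := natAbs_discr_dvd_of_natCast_mem_differentIdeal K₀ K
    (natCast_mem_differentIdeal_of_pow_eq_one (𝓞 K₀) K₀ hzN hz)
  have hdeg : finrank K₀ K ≤ N.totient := hζ.finrank_le_totient hN₀ hgen
  have hrank : finrank ℚ K ≤ finrank ℚ K₀ * N := by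
    rw [← finrank_mul_finrank ℚ K₀ K]
    exact Nat.mul_le_mul_left _ (hdeg.trans (Nat.totient_le N))
  have hD₀ : 1 ≤ (discr K₀).natAbs := Int.natAbs_pos.mpr (discr_ne_zero K₀)
  suffices (discr K).natAbs ≤ N ^ (finrank ℚ K₀ * N) * (discr K₀).natAbs ^ N.totient by
    rw [Int.abs_eq_natAbs, Int.abs_eq_natAbs]
    exact_mod_cast this
  calc (discr K).natAbs
      ≤ N ^ finrank ℚ K * (discr K₀).natAbs ^ finrank K₀ K :=
        Nat.le_of_dvd (by positivity) hdvd
    _ ≤ N ^ (finrank ℚ K₀ * N) * (discr K₀).natAbs ^ N.totient := by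
        gcongr
        omega
end

section
/- For every integer N ≥ 1, the number of elements of exact additive order N in the group (ℤ/Nℤ)² equals N² ∏_{p | N} (1 − p^{−2}), where the product runs over all prime divisors p of N. -/
/-!
Both sides are multiplicative in `N`. By the Chinese remainder theorem
`(ℤ/mnℤ)² ≃ (ℤ/mℤ)² × (ℤ/nℤ)²`, and for coprime `m`, `n` an element of the product has order
`mn` exactly when its components have orders `m` and `n`. For `N = p^(k+1)` an element has order
`N` iff `p^k` does not kill it, and the `p^k`-torsion of the cyclic group `ℤ/p^(k+1)ℤ` has `p^k`
elements (a sum of `φ(e)` over `e ∣ p^k`), so `p^(2k+2) - p^(2k)` elements of `(ℤ/p^(k+1)ℤ)²`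
have order `N`.
-/

open Finset

section

variable {G H : Type*}

theorem AddEquiv.natCard_addOrderOf_eq [AddMonoid G] [AddMonoid H] (e : G ≃+ H) (n : ℕ) :
    Nat.card {x : G // addOrderOf x = n} = Nat.card {y : H // addOrderOf y = n} :=
  Nat.card_congr (e.toEquiv.subtypeEquiv fun x => by rw [← e.addOrderOf_eq x]; rfl)

theorem addOrderOf_prodMk_eq_mul_iff [AddMonoid G] [AddMonoid H] {m n : ℕ} (hmn : m.Coprime n)
    {g : G} {h : H} (hg : addOrderOf g ∣ m) (hh : addOrderOf h ∣ n) :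
    addOrderOf (g, h) = m * n ↔ addOrderOf g = m ∧ addOrderOf h = n := by
  have hcop : (addOrderOf g).Coprime (addOrderOf h) :=
    (hmn.coprime_dvd_left hg).coprime_dvd_right hh
  rw [Prod.addOrderOf_mk, hcop.lcm_eq_mul]
  refine ⟨fun hgh => ⟨Nat.dvd_antisymm hg ?_, Nat.dvd_antisymm hh ?_⟩,
    fun ⟨hg', hh'⟩ => by rw [hg', hh']⟩
  · exact (hmn.coprime_dvd_right hh).dvd_of_dvd_mul_right (hgh ▸ dvd_mul_right m n)
  · exact (hmn.symm.coprime_dvd_right hg).dvd_of_dvd_mul_left (hgh ▸ dvd_mul_left n m)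

theorem natCard_addOrderOf_prod_eq_mul [AddMonoid G] [AddMonoid H] {m n : ℕ}
    (hmn : m.Coprime n) (hG : ∀ g : G, m • g = 0) (hH : ∀ h : H, n • h = 0) :
    Nat.card {x : G × H // addOrderOf x = m * n} =
      Nat.card {g : G // addOrderOf g = m} * Nat.card {h : H // addOrderOf h = n} := by
  rw [← Nat.card_prod]
  refine Nat.card_congr ((Equiv.subtypeEquivRight fun x => ?_).trans Equiv.subtypeProdEquivProd)
  exact addOrderOf_prodMk_eq_mul_iff hmn (addOrderOf_dvd_of_nsmul_eq_zero (hG x.1))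
    (addOrderOf_dvd_of_nsmul_eq_zero (hH x.2))

theorem natCard_nsmul_prod_eq_zero [AddMonoid G] [AddMonoid H] (d : ℕ) :
    Nat.card {x : G × H // d • x = 0} =
      Nat.card {g : G // d • g = 0} * Nat.card {h : H // d • h = 0} := by
  rw [← Nat.card_prod]
  exact Nat.card_congr ((Equiv.subtypeEquivRight fun _ => Prod.ext_iff).trans
    (Equiv.subtypeProdEquivProd (p := fun g : G => d • g = 0) (q := fun h : H => d • h = 0)))

theorem IsAddCyclic.natCard_nsmul_eq_zero [AddGroup G] [Fintype G] [IsAddCyclic G] {d : ℕ}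
    (hd : d ∣ Fintype.card G) : Nat.card {g : G // d • g = 0} = d := by
  classical
  have hd0 : d ≠ 0 := fun h => Fintype.card_ne_zero (Nat.eq_zero_of_zero_dvd (h ▸ hd))
  calc Nat.card {g : G // d • g = 0} = #{g : G | d • g = 0} := by
        rw [Nat.card_eq_fintype_card, Fintype.card_subtype]
    _ = ∑ e ∈ d.divisors, #{g : G | addOrderOf g = e} :=
        (sum_card_addOrderOf_eq_card_nsmul_eq_zero hd0).symm
    _ = ∑ e ∈ d.divisors, e.totient := sum_congr rfl fun e he =>
        IsAddCyclic.card_addOrderOf_eq_totient ((Nat.dvd_of_mem_divisors he).trans hd)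
    _ = d := Nat.sum_totient d

theorem natCard_addOrderOf_eq_prime_pow_succ [AddMonoid G] [Finite G] {p k : ℕ} (hp : p.Prime)
    (hG : ∀ g : G, p ^ (k + 1) • g = 0) :
    Nat.card {g : G // addOrderOf g = p ^ (k + 1)} =
      Nat.card G - Nat.card {g : G // p ^ k • g = 0} := by
  have : Fact p.Prime := ⟨hp⟩
  have hiff (g : G) : addOrderOf g = p ^ (k + 1) ↔ ¬p ^ k • g = 0 := by
    refine ⟨fun h hk => ?_, fun hk => addOrderOf_eq_prime_pow hk (hG g)⟩
    have := (Nat.pow_dvd_pow_iff_le_right hp.one_lt).mp (h ▸ addOrderOf_dvd_of_nsmul_eq_zero hk)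
    omega
  classical
  have := Fintype.ofFinite G
  rw [Nat.card_congr (Equiv.subtypeEquivRight hiff)]
  simp only [Nat.card_eq_fintype_card, Fintype.card_subtype_compl]

end

theorem natCard_addOrderOf_zmod_sq_mul {m n : ℕ} (hmn : m.Coprime n) :
    Nat.card {x : ZMod (m * n) × ZMod (m * n) // addOrderOf x = m * n} =
      Nat.card {x : ZMod m × ZMod m // addOrderOf x = m} *
        Nat.card {x : ZMod n × ZMod n // addOrderOf x = n} := by
  let crt := (ZMod.chineseRemainder hmn).toAddEquiv
  rw [((crt.prodCongr crt).trans (AddEquiv.prodProdProdComm _ _ _ _)).natCard_addOrderOf_eq,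
    natCard_addOrderOf_prod_eq_mul hmn (ZModModule.char_nsmul_eq_zero m)
      (ZModModule.char_nsmul_eq_zero n)]

theorem natCard_addOrderOf_zmod_prime_pow_sq {p k : ℕ} (hp : p.Prime) :
    Nat.card {x : ZMod (p ^ (k + 1)) × ZMod (p ^ (k + 1)) // addOrderOf x = p ^ (k + 1)} =
      (p ^ (k + 1)) ^ 2 - (p ^ k) ^ 2 := by
  have : NeZero (p ^ (k + 1)) := ⟨pow_ne_zero _ hp.ne_zero⟩
  have htorsion : Nat.card {a : ZMod (p ^ (k + 1)) // p ^ k • a = 0} = p ^ k :=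
    IsAddCyclic.natCard_nsmul_eq_zero (by rw [ZMod.card]; exact pow_dvd_pow p k.le_succ)
  rw [natCard_addOrderOf_eq_prime_pow_succ hp (ZModModule.char_nsmul_eq_zero _),
    natCard_nsmul_prod_eq_zero, htorsion, Nat.card_prod, Nat.card_zmod, sq, sq]

/-- For every integer `N ≥ 1`, the number of elements of exact additive order `N` in
`(ℤ/Nℤ)²` equals `N² ∏_{p ∣ N} (1 - p⁻²)`, the product running over the prime
divisors of `N`. -/
theorem card_exact_order_zmod_sq (N : ℕ) (hN : 1 ≤ N) :
    (Nat.card {x : ZMod N × ZMod N // addOrderOf x = N} : ℝ) =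
      N ^ 2 * ∏ p ∈ N.primeFactors, (1 - ((p : ℝ)) ^ (-2 : ℤ)) := by
  induction N using Nat.recOnPosPrimePosCoprime with
  | zero => omega
  | one => simp
  | prime_pow p k hp hk =>
    obtain ⟨k, rfl⟩ := Nat.exists_eq_add_of_lt hk
    have hp0 : (p : ℝ) ≠ 0 := Nat.cast_ne_zero.mpr hp.ne_zero
    rw [zero_add, natCard_addOrderOf_zmod_prime_pow_sq hp,
      Nat.primeFactors_prime_pow k.succ_ne_zero hp, prod_singleton,
      Nat.cast_sub (by gcongr; exacts [hp.one_lt.le, k.le_succ])]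
    push_cast
    field_simp
    ring
  | coprime a b ha hb hab iha ihb =>
    rw [natCard_addOrderOf_zmod_sq_mul hab, Nat.cast_mul, iha ha.le, ihb hb.le,
      Nat.primeFactors_mul (by omega) (by omega), prod_union hab.disjoint_primeFactors]
    push_cast
    ring
end

section
/- Let N ≥ 2 and n ≥ 0 be integers and let t be a real number with 0 < t ≤ 10^{−N}. Then ∑_{k=n+1}^{∞} (k + N) t^{k/N} ≤ 2(n + N + 1) t^{(n+1)/N}. -/
/-- Let `N ≥ 2` and `n ≥ 0` be integers and let `0 < t ≤ 10^{-N}`.  Then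
`∑_{k=n+1}^{∞} (k + N) t^{k/N} ≤ 2 (n + N + 1) t^{(n+1)/N}`. -/
theorem tsum_le_two_mul (N n : ℕ) (hN : 2 ≤ N) (t : ℝ) (ht : 0 < t)
    (ht' : t ≤ (10 : ℝ) ^ (-(N : ℝ))) :
    ∑' k : ℕ, (((n : ℝ) + 1 + k) + N) * t ^ (((n : ℝ) + 1 + k) / N) ≤
      2 * ((n : ℝ) + N + 1) * t ^ (((n : ℝ) + 1) / N) := by
  have hNpos : (0:ℝ) < N := by
    have : 0 < N := by omega
    exact_mod_cast this
  set s : ℝ := t ^ ((1:ℝ)/N) with hs_def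
  have hs0 : 0 ≤ s := Real.rpow_nonneg ht.le _
  have hs10 : s ≤ 1/10 := by
    have h1 : t ^ ((1:ℝ)/N) ≤ ((10:ℝ) ^ (-(N:ℝ))) ^ ((1:ℝ)/N) :=
      Real.rpow_le_rpow ht.le ht' (by positivity)
    have h2 : ((10:ℝ) ^ (-(N:ℝ))) ^ ((1:ℝ)/N) = 1/10 := by
      rw [← Real.rpow_mul (by norm_num : (0:ℝ) ≤ 10)]
      rw [show -(N:ℝ) * (1/N) = -1 by field_simp]
      norm_num [Real.rpow_neg_one]
    rw [hs_def]
    rw [h2] at h1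
    exact h1
  have hslt : s < 1 := by linarith
  have hterm : ∀ k : ℕ, t ^ (((n:ℝ)+1+k)/N) = t ^ (((n:ℝ)+1)/N) * s ^ k := by
    intro k
    rw [show ((n:ℝ)+1+k)/N = ((n:ℝ)+1)/N + (1/N)*k by ring]
    rw [Real.rpow_add ht, Real.rpow_mul ht.le, Real.rpow_natCast]
  set A : ℝ := t ^ (((n:ℝ)+1)/N) with hA_def
  have hA : 0 < A := Real.rpow_pos_of_pos ht _
  set c : ℝ := (n:ℝ) + 1 + N with hc_def
  have hc3 : 3 ≤ c := by
    have : (2:ℝ) ≤ N := by exact_mod_cast hN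
    have h0 : (0:ℝ) ≤ n := Nat.cast_nonneg n
    rw [hc_def]; linarith
  have hsum1 : HasSum (fun k:ℕ => s ^ k) (1-s)⁻¹ := hasSum_geometric_of_lt_one hs0 hslt
  have hsum2 : HasSum (fun k:ℕ => (k:ℝ) * s ^ k) (s/(1-s)^2) :=
    hasSum_coe_mul_geometric_of_norm_lt_one
      (by rwa [Real.norm_eq_abs, abs_of_nonneg hs0])
  have hsum : HasSum (fun k:ℕ => (((n:ℝ)+1+k)+N) * (A * s^k))
      (A * (c*(1-s)⁻¹ + s/(1-s)^2)) := by
    have h := ((hsum1.mul_left c).add hsum2).mul_left A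
    have he : (fun k:ℕ => A * (c * s^k + (k:ℝ)*s^k))
        = fun k:ℕ => (((n:ℝ)+1+k)+N) * (A * s^k) := by
      funext k; rw [hc_def]; ring
    rwa [he] at h
  have h1s : (0:ℝ) < 1 - s := by linarith
  have key : c*(1-s)⁻¹ + s/(1-s)^2 ≤ 2*c := by
    have e : c*(1-s)⁻¹ + s/(1-s)^2 = (c*(1-s)+s)/(1-s)^2 := by
      field_simp
    rw [e, div_le_iff₀ (by positivity)]
    nlinarith [mul_nonneg (mul_nonneg (by linarith : (0:ℝ) ≤ c) hs0) hs0,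
      mul_nonneg (by linarith : (0:ℝ) ≤ c) hs0]
  calc ∑' k : ℕ, (((n : ℝ) + 1 + k) + N) * t ^ (((n : ℝ) + 1 + k) / N)
      = ∑' k : ℕ, (((n : ℝ) + 1 + k) + N) * (A * s^k) := by
        simp only [hterm]
    _ = A * (c*(1-s)⁻¹ + s/(1-s)^2) := hsum.tsum_eq
    _ ≤ A * (2*c) := by
        exact mul_le_mul_of_nonneg_left key hA.le
    _ = 2 * ((n : ℝ) + N + 1) * A := by rw [hc_def]; ring
end
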